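/- arXiv:2012.02213 — 7 statements merged into one kernel-verified Lean document; each statement's English description precedes it below -/
import Mathlib

section
/- Let Δ ⊂ ℝⁿ be compact and T(x) = argmax_{y ∈ Δ} x·y. For any sequence with x_{i+1} ∈ T(x_i), we have ‖x_{i+1} − x_i‖² ≤ ‖x_{i+1}‖² − ‖x_i‖², and consequently ‖x_{i+1} − x_i‖ → 0 as i → ∞. -/
/-! Since `x i ∈ Δ` and `x (i + 1)` maximizes `⟪x i, ·⟫` on `Δ`, we get `⟪x i, x i⟫ ≤ ⟪x i, x (i + 1)⟫`,
which expands to the inequality. Hence `‖x i‖²` is nondecreasing; being bounded on the compact `Δ`,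
it converges, so its increments, which dominate `‖x (i + 1) - x i‖²`, tend to zero. -/

open Filter Topology

theorem norm_sub_sq_le_of_inner_self_le {E : Type*} [NormedAddCommGroup E]
    [InnerProductSpace ℝ E] {x y : E} (h : inner ℝ x x ≤ inner ℝ x y) :
    ‖y - x‖ ^ 2 ≤ ‖y‖ ^ 2 - ‖x‖ ^ 2 := by
  rw [norm_sub_sq_real, real_inner_comm, ← real_inner_self_eq_norm_sq x]
  linarith

theorem tendsto_zero_of_le_sub_succ {a d : ℕ → ℝ} (hd : ∀ i, 0 ≤ d i)
    (hda : ∀ i, d i ≤ a (i + 1) - a i) (hbdd : BddAbove (Set.range a)) :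
    Tendsto d atTop (𝓝 0) := by
  have hmono : Monotone a :=
    monotone_nat_of_le_succ fun i => by linarith [hd i, hda i]
  have hlim := tendsto_atTop_ciSup hmono hbdd
  have hincr : Tendsto (fun i => a (i + 1) - a i) atTop (𝓝 0) := by
    simpa using (hlim.comp (tendsto_add_atTop_nat 1)).sub hlim
  exact squeeze_zero hd hda hincr

theorem stmt1_general {n : ℕ} (Δ : Set (EuclideanSpace ℝ (Fin n)))
    (hc : IsCompact Δ) (x : ℕ → EuclideanSpace ℝ (Fin n)) (hx0 : x 0 ∈ Δ)
    (hstep : ∀ i, x (i + 1) ∈ Δ ∧ ∀ y ∈ Δ, (inner ℝ (x i) y : ℝ) ≤ inner ℝ (x i) (x (i + 1))) :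
    (∀ i, ‖x (i + 1) - x i‖ ^ 2 ≤ ‖x (i + 1)‖ ^ 2 - ‖x i‖ ^ 2) ∧
      Filter.Tendsto (fun i => ‖x (i + 1) - x i‖) Filter.atTop (nhds 0) := by
  have hmem : ∀ i, x i ∈ Δ
    | 0 => hx0
    | i + 1 => (hstep i).1
  have hgap : ∀ i, ‖x (i + 1) - x i‖ ^ 2 ≤ ‖x (i + 1)‖ ^ 2 - ‖x i‖ ^ 2 := fun i =>
    norm_sub_sq_le_of_inner_self_le ((hstep i).2 (x i) (hmem i))
  have hbdd : BddAbove (Set.range fun i => ‖x i‖ ^ 2) :=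
    (hc.bddAbove_image (f := fun y => ‖y‖ ^ 2) (by fun_prop)).mono
      (Set.range_subset_iff.2 fun i => Set.mem_image_of_mem _ (hmem i))
  refine ⟨hgap, ?_⟩
  have hsq := tendsto_zero_of_le_sub_succ (fun i => sq_nonneg _) hgap hbdd
  simpa using hsq.sqrt

theorem stmt1 {n : ℕ} (Δ : Set (EuclideanSpace ℝ (Fin n))) (hne : Δ.Nonempty)
    (hc : IsCompact Δ) (x : ℕ → EuclideanSpace ℝ (Fin n)) (hx0 : x 0 ∈ Δ)
    (hstep : ∀ i, x (i + 1) ∈ Δ ∧ ∀ y ∈ Δ, (inner ℝ (x i) y : ℝ) ≤ inner ℝ (x i) (x (i + 1))) :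
    (∀ i, ‖x (i + 1) - x i‖ ^ 2 ≤ ‖x (i + 1)‖ ^ 2 - ‖x i‖ ^ 2) ∧
      Filter.Tendsto (fun i => ‖x (i + 1) - x i‖) Filter.atTop (nhds 0) :=
  stmt1_general Δ hc x hx0 hstep
end

section
/- Let Δ ⊂ ℝⁿ be compact and T(x) = argmax_{y ∈ Δ} x·y. Every limit point x* of a sequence generated by x_{i+1} ∈ T(x_i) is a fixed point of T, i.e., x* ∈ T(x*). -/
/-!
Since `x i ∈ Δ`, the maximality of `x (i + 1)` gives `‖x i‖² ≤ ⟪x i, x (i + 1)⟫ ≤ ‖x i‖ ‖x (i + 1)‖`,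
so the norms `‖x i‖` increase; along the convergent subsequence they tend to `‖x*‖`, hence
`‖x i‖ ≤ ‖x*‖` for all `i`. Then `⟪x (φ k), y⟫ ≤ ⟪x (φ k), x (φ k + 1)⟫ ≤ ‖x*‖²` for every `y ∈ Δ`,
and letting `k → ∞` gives `⟪x*, y⟫ ≤ ⟪x*, x*⟫`. Closedness of `Δ` gives `x* ∈ Δ`.
-/

open Filter Topology

open scoped RealInnerProductSpace

variable {E : Type*} [NormedAddCommGroup E] [InnerProductSpace ℝ E]

lemma norm_le_norm_of_inner_self_le_inner {u v : E} (h : ⟪u, u⟫ ≤ ⟪u, v⟫) : ‖u‖ ≤ ‖v‖ := by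
  rcases (norm_nonneg u).eq_or_lt with hu | hu
  · exact hu ▸ norm_nonneg v
  · refine le_of_mul_le_mul_left ?_ hu
    calc ‖u‖ * ‖u‖ = ⟪u, u⟫ := (real_inner_self_eq_norm_mul_norm u).symm
      _ ≤ ⟪u, v⟫ := h
      _ ≤ ‖u‖ * ‖v‖ := real_inner_le_norm u v

section AscentSequence

variable {Δ : Set E} {x : ℕ → E}
  (hstep : ∀ i, x (i + 1) ∈ Δ ∧ ∀ y ∈ Δ, ⟪x i, y⟫ ≤ ⟪x i, x (i + 1)⟫)
include hstep

lemma mem_of_ascent_step (hx0 : x 0 ∈ Δ) : ∀ i, x i ∈ Δ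
  | 0 => hx0
  | i + 1 => (hstep i).1

lemma monotone_norm_of_ascent_step (hx0 : x 0 ∈ Δ) : Monotone (‖x ·‖) :=
  monotone_nat_of_le_succ fun i =>
    norm_le_norm_of_inner_self_le_inner ((hstep i).2 (x i) (mem_of_ascent_step hstep hx0 i))

lemma norm_le_of_ascent_step_of_tendsto_subseq (hx0 : x 0 ∈ Δ) {φ : ℕ → ℕ} (hφ : StrictMono φ)
    {xstar : E} (hlim : Tendsto (x ∘ φ) atTop (𝓝 xstar)) (i : ℕ) : ‖x i‖ ≤ ‖xstar‖ := by
  have hmono := monotone_norm_of_ascent_step hstep hx0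
  have hnorm : Tendsto (‖x ·‖) atTop (𝓝 ‖xstar‖) :=
    (tendsto_iff_tendsto_subseq_of_monotone hmono hφ.tendsto_atTop).2 hlim.norm
  exact hmono.ge_of_tendsto hnorm i

theorem mem_argmax_inner_self_of_tendsto_subseq (hΔ : IsClosed Δ) (hx0 : x 0 ∈ Δ)
    {φ : ℕ → ℕ} (hφ : StrictMono φ) {xstar : E} (hlim : Tendsto (x ∘ φ) atTop (𝓝 xstar)) :
    xstar ∈ Δ ∧ ∀ y ∈ Δ, ⟪xstar, y⟫ ≤ ⟪xstar, xstar⟫ := by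
  have hbound := norm_le_of_ascent_step_of_tendsto_subseq hstep hx0 hφ hlim
  refine ⟨hΔ.mem_of_tendsto hlim (Eventually.of_forall fun k =>
    mem_of_ascent_step hstep hx0 (φ k)), fun y hy => ?_⟩
  have hle : ∀ k, ⟪x (φ k), y⟫ ≤ ‖xstar‖ * ‖xstar‖ := fun k =>
    calc ⟪x (φ k), y⟫ ≤ ⟪x (φ k), x (φ k + 1)⟫ := (hstep (φ k)).2 y hy
      _ ≤ ‖x (φ k)‖ * ‖x (φ k + 1)‖ := real_inner_le_norm _ _
      _ ≤ ‖xstar‖ * ‖xstar‖ := mul_le_mul (hbound _) (hbound _) (norm_nonneg _) (norm_nonneg _)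
  rw [real_inner_self_eq_norm_mul_norm]
  exact le_of_tendsto (hlim.inner tendsto_const_nhds) (Eventually.of_forall hle)

end AscentSequence

theorem stmt2_general {n : ℕ} (Δ : Set (EuclideanSpace ℝ (Fin n)))
    (hc : IsCompact Δ) (x : ℕ → EuclideanSpace ℝ (Fin n)) (hx0 : x 0 ∈ Δ)
    (hstep : ∀ i, x (i + 1) ∈ Δ ∧ ∀ y ∈ Δ, (inner ℝ (x i) y : ℝ) ≤ inner ℝ (x i) (x (i + 1)))
    (xstar : EuclideanSpace ℝ (Fin n))
    (hlim : ∃ φ : ℕ → ℕ, StrictMono φ ∧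
      Filter.Tendsto (fun k => x (φ k)) Filter.atTop (nhds xstar)) :
    xstar ∈ Δ ∧ ∀ y ∈ Δ, (inner ℝ xstar y : ℝ) ≤ inner ℝ xstar xstar := by
  obtain ⟨φ, hφ, htend⟩ := hlim
  exact mem_argmax_inner_self_of_tendsto_subseq hstep hc.isClosed hx0 hφ htend

theorem stmt2 {n : ℕ} (Δ : Set (EuclideanSpace ℝ (Fin n))) (hne : Δ.Nonempty)
    (hc : IsCompact Δ) (x : ℕ → EuclideanSpace ℝ (Fin n)) (hx0 : x 0 ∈ Δ)
    (hstep : ∀ i, x (i + 1) ∈ Δ ∧ ∀ y ∈ Δ, (inner ℝ (x i) y : ℝ) ≤ inner ℝ (x i) (x (i + 1)))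
    (xstar : EuclideanSpace ℝ (Fin n))
    (hlim : ∃ φ : ℕ → ℕ, StrictMono φ ∧
      Filter.Tendsto (fun k => x (φ k)) Filter.atTop (nhds xstar)) :
    xstar ∈ Δ ∧ ∀ y ∈ Δ, (inner ℝ xstar y : ℝ) ≤ inner ℝ xstar xstar :=
  stmt2_general Δ hc x hx0 hstep xstar hlim
end

section
/- Let M be an n×n real symmetric matrix and let X maximize Y ↦ M·Y (Frobenius inner product) over the elliptope L_n. Then there exists a diagonal matrix D with MX = DX. -/
def elliptope (n : ℕ) : Set (Matrix (Fin n) (Fin n) ℝ) :=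
  {X | X.PosSemidef ∧ ∀ i, X i i = 1}

def frob {n : ℕ} (A B : Matrix (Fin n) (Fin n) ℝ) : ℝ :=
  ∑ i, ∑ j, A i j * B i j

/-! Factor `X` as the Gram matrix of unit vectors `b₁, …, bₙ`. Replacing `bᵢ` alone by a unit
vector `u` keeps the Gram matrix in the elliptope and, on the unit sphere, changes the objective by
`2 ⟪wᵢ, u - bᵢ⟫` with `wᵢ = ∑ⱼ Mᵢⱼ bⱼ - Mᵢᵢ bᵢ`. Maximality at `u = bᵢ` forces `wᵢ = ‖wᵢ‖ bᵢ`
(equality in Cauchy–Schwarz), so `∑ⱼ Mᵢⱼ bⱼ = μᵢ bᵢ`, and pairing with `bₖ` gives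
`(M X)ᵢₖ = μᵢ Xᵢₖ`. -/

open Matrix
open scoped RealInnerProductSpace ComplexOrder

theorem Matrix.PosSemidef.exists_eq_gram {𝕜 ι : Type*} [RCLike 𝕜] [Fintype ι]
    {A : Matrix ι ι 𝕜} (hA : A.PosSemidef) :
    ∃ v : ι → EuclideanSpace 𝕜 ι, A = gram 𝕜 v := by
  classical
  obtain ⟨B, rfl⟩ : ∃ B : Matrix ι ι 𝕜, A = star B * B := by
    open scoped MatrixOrder in exact CStarAlgebra.nonneg_iff_eq_star_mul_self.mp hA.nonneg
  refine ⟨fun j ↦ WithLp.toLp 2 (fun k ↦ B k j), ?_⟩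
  ext i j
  simp [gram_apply, EuclideanSpace.inner_toLp_toLp, mul_apply, dotProduct, mul_comm]

variable {E : Type*} [NormedAddCommGroup E] [InnerProductSpace ℝ E]

theorem eq_norm_smul_of_forall_inner_le {v w : E} (hv : ‖v‖ = 1)
    (h : ∀ u : E, ‖u‖ = 1 → ⟪w, u⟫ ≤ ⟪w, v⟫) : w = ‖w‖ • v := by
  have hle : ‖w‖ ≤ ⟪w, v⟫ := by
    rcases eq_or_ne w 0 with rfl | hw
    · simp
    · have := h (‖w‖⁻¹ • w) (norm_smul_inv_norm hw)
      rwa [real_inner_smul_right, real_inner_self_eq_norm_sq, pow_two,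
        inv_mul_cancel_left₀ (norm_ne_zero_iff.mpr hw)] at this
  have heq : ⟪w, v⟫ = ‖w‖ * ‖v‖ :=
    le_antisymm (real_inner_le_norm w v) (by rwa [hv, mul_one])
  simpa [hv] using inner_eq_norm_mul_iff_real.mp heq

variable {ι : Type*} [Fintype ι]

def gramPairing (M : Matrix ι ι ℝ) (b : ι → E) : ℝ :=
  ∑ i, ∑ j, M i j * ⟪b i, b j⟫

theorem gramPairing_update [DecidableEq ι] {M : Matrix ι ι ℝ} (hM : M.IsSymm) (b : ι → E)
    (i : ι) (u : E) :
    gramPairing M (Function.update b i u) =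
      gramPairing M b + 2 * ⟪∑ j, M i j • b j, u - b i⟫ + M i i * ‖u - b i‖ ^ 2 := by
  have hupd : Function.update b i u = b + Pi.single i (u - b i) := by
    ext1 j
    rcases eq_or_ne j i with rfl | hj <;> simp [*]
  have hMsymm : ∀ j, M j i = M i j := fun j ↦ hM.apply i j
  simp only [gramPairing, hupd, Pi.add_apply, inner_add_left, inner_add_right, mul_add,
    Finset.sum_add_distrib]
  simp [Pi.single_apply, apply_ite, hMsymm, sum_inner, real_inner_smul_left, real_inner_comm]
  ring

theorem exists_sum_smul_eq_smul_of_isMaxOn {M : Matrix ι ι ℝ} (hM : M.IsSymm) {b : ι → E}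
    (hb : ∀ j, ‖b j‖ = 1) (hmax : IsMaxOn (gramPairing M) {c | ∀ j, ‖c j‖ = 1} b) (i : ι) :
    ∃ μ : ℝ, ∑ j, M i j • b j = μ • b i := by
  classical
  set g := ∑ j, M i j • b j with hg
  have hlin : ∀ u : E, ‖u‖ = 1 → ⟪g - M i i • b i, u⟫ ≤ ⟪g - M i i • b i, b i⟫ := by
    intro u hu
    have hupd := isMaxOn_iff.mp hmax (Function.update b i u) fun j ↦ by
      rcases eq_or_ne j i with rfl | hj <;> simp [*]
    rw [gramPairing_update hM, ← hg, norm_sub_sq_real, hu, hb i, inner_sub_right] at hupd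
    rw [inner_sub_left, inner_sub_left, real_inner_smul_left, real_inner_smul_left,
      real_inner_self_eq_norm_sq, hb i, real_inner_comm u (b i)]
    linarith
  refine ⟨‖g - M i i • b i‖ + M i i, ?_⟩
  rw [add_smul, ← eq_norm_smul_of_forall_inner_le (hb i) hlin, sub_add_cancel]

theorem mul_gram_apply (M : Matrix ι ι ℝ) (b : ι → E) (i k : ι) :
    (M * gram ℝ b) i k = ⟪∑ j, M i j • b j, b k⟫ := by
  simp [mul_apply, gram_apply, sum_inner, real_inner_smul_left]

theorem gram_mem_elliptope_iff {n : ℕ} (b : Fin n → E) :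
    gram ℝ b ∈ elliptope n ↔ ∀ i, ‖b i‖ = 1 := by
  simp only [elliptope, Set.mem_ofPred_eq, posSemidef_gram, true_and, gram_apply,
    real_inner_self_eq_norm_sq, pow_eq_one_iff_of_nonneg (norm_nonneg _) two_ne_zero]

theorem stmt7 {n : ℕ} (M X : Matrix (Fin n) (Fin n) ℝ) (hM : M.IsSymm)
    (hX : X ∈ elliptope n) (hmax : ∀ Y ∈ elliptope n, frob M Y ≤ frob M X) :
    ∃ D : Matrix (Fin n) (Fin n) ℝ, D.IsDiag ∧ M * X = D * X := by
  obtain ⟨b, rfl⟩ := hX.1.exists_eq_gram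
  have hb := (gram_mem_elliptope_iff b).mp hX
  choose μ hμ using exists_sum_smul_eq_smul_of_isMaxOn hM hb <| isMaxOn_iff.mpr fun c hc ↦
    hmax _ ((gram_mem_elliptope_iff c).mpr hc)
  refine ⟨diagonal μ, isDiag_diagonal μ, ?_⟩
  ext i k
  rw [mul_gram_apply, hμ i, diagonal_mul, gram_apply, real_inner_smul_left]
end

section
/- Let M be an n×n real symmetric matrix and X ∈ L_n a maximizer of Y ↦ M·Y over L_n, written as the Gram matrix of unit vectors v₁,…,vₙ ∈ ℝⁿ. Then for each i there exists α_i ∈ ℝ with ∑_{j≠i} M_{ij} v_j = α_i v_i. -/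
open Finset Matrix
open scoped RealInnerProductSpace

variable {E : Type*} [NormedAddCommGroup E] [InnerProductSpace ℝ E]

theorem eq_norm_smul_of_forall_inner_le_s8 {x w : E} (hx : ‖x‖ = 1)
    (hmax : ∀ u : E, ‖u‖ = 1 → ⟪u, w⟫ ≤ ⟪x, w⟫) : w = ‖w‖ • x := by
  rcases eq_or_ne w 0 with rfl | hw
  · simp
  have hw' : ‖w‖ ≠ 0 := norm_ne_zero_iff.mpr hw
  have hunit : ‖‖w‖⁻¹ • w‖ = 1 := by
    rw [norm_smul, norm_inv, norm_norm, inv_mul_cancel₀ hw']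
  have hge : ‖w‖ ≤ ⟪x, w⟫ := by
    calc ‖w‖ = ⟪‖w‖⁻¹ • w, w⟫ := by
          rw [real_inner_smul_left, real_inner_self_eq_norm_sq]; field_simp
      _ ≤ ⟪x, w⟫ := hmax _ hunit
  have heq : ⟪x, w⟫ = ‖x‖ * ‖w‖ :=
    le_antisymm (real_inner_le_norm x w) (by rwa [hx, one_mul])
  have := inner_eq_norm_mul_iff_real.mp heq
  rwa [hx, one_smul, eq_comm] at this

namespace Matrix

variable {n : ℕ}

theorem gram_mem_elliptope {v : Fin n → E} (hunit : ∀ i, ‖v i‖ = 1) :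
    gram ℝ v ∈ elliptope n :=
  ⟨posSemidef_gram ℝ v, fun i => by rw [gram_apply, real_inner_self_eq_norm_sq, hunit i, one_pow]⟩

theorem frob_gram_eq {M : Matrix (Fin n) (Fin n) ℝ} (hM : M.IsSymm) (v : Fin n → E)
    (i : Fin n) :
    frob M (gram ℝ v) = M i i * ‖v i‖ ^ 2 + 2 * ⟪v i, ∑ j ∈ univ.erase i, M i j • v j⟫ +
      ∑ j ∈ univ.erase i, ∑ k ∈ univ.erase i, M j k * ⟪v j, v k⟫ := by
  have hsplit : ∀ j, ∑ k, M j k * ⟪v j, v k⟫ =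
      M j i * ⟪v j, v i⟫ + ∑ k ∈ univ.erase i, M j k * ⟪v j, v k⟫ := fun j =>
    (add_sum_erase _ _ (mem_univ i)).symm
  have hrow : ⟪v i, ∑ j ∈ univ.erase i, M i j • v j⟫ =
      ∑ j ∈ univ.erase i, M i j * ⟪v i, v j⟫ := by
    simp only [inner_sum, real_inner_smul_right]
  have hcol : ∑ j ∈ univ.erase i, M j i * ⟪v j, v i⟫ = ∑ j ∈ univ.erase i, M i j * ⟪v i, v j⟫ :=
    sum_congr rfl fun j _ => by rw [hM.apply i j, real_inner_comm]
  simp only [frob, gram_apply]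
  rw [← add_sum_erase _ _ (mem_univ i), hsplit, sum_congr rfl fun j _ => hsplit j,
    sum_add_distrib, hcol, hrow, real_inner_self_eq_norm_sq]
  ring

theorem inner_le_of_forall_frob_le_frob_gram {M : Matrix (Fin n) (Fin n) ℝ} (hM : M.IsSymm)
    {v : Fin n → E} (hunit : ∀ j, ‖v j‖ = 1)
    (hmax : ∀ Y ∈ elliptope n, frob M Y ≤ frob M (gram ℝ v)) (i : Fin n) {u : E}
    (hu : ‖u‖ = 1) :
    ⟪u, ∑ j ∈ univ.erase i, M i j • v j⟫ ≤ ⟪v i, ∑ j ∈ univ.erase i, M i j • v j⟫ := by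
  set v' := Function.update v i u
  have hv'_unit : ∀ j, ‖v' j‖ = 1 := fun j => by
    rcases eq_or_ne j i with rfl | hj
    · simpa [v'] using hu
    · simpa [v', hj] using hunit j
  have hv'_off : ∀ j ∈ univ.erase i, v' j = v j := fun j hj =>
    Function.update_of_ne (ne_of_mem_erase hj) u v
  have hle := hmax _ (gram_mem_elliptope hv'_unit)
  rw [frob_gram_eq hM v' i, frob_gram_eq hM v i, hv'_unit i, hunit i,
    sum_congr rfl fun j hj => by rw [hv'_off j hj],
    sum_congr rfl fun j hj => sum_congr rfl fun k hk => by rw [hv'_off j hj, hv'_off k hk]] at hle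
  simpa [v'] using hle

end Matrix

theorem stmt8_general {n : ℕ} (M X : Matrix (Fin n) (Fin n) ℝ) (hM : M.IsSymm)
    (hmax : ∀ Y ∈ elliptope n, frob M Y ≤ frob M X)
    (v : Fin n → EuclideanSpace ℝ (Fin n)) (hunit : ∀ i, ‖v i‖ = 1)
    (hgram : ∀ i j, X i j = inner ℝ (v i) (v j)) :
    ∀ i : Fin n, ∃ α : ℝ, ∑ j ∈ Finset.univ.erase i, M i j • v j = α • v i := by
  obtain rfl : X = gram ℝ v := Matrix.ext hgram
  exact fun i => ⟨_, eq_norm_smul_of_forall_inner_le_s8 (hunit i) fun u hu =>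
    inner_le_of_forall_frob_le_frob_gram hM hunit hmax i hu⟩

theorem stmt8 {n : ℕ} (M X : Matrix (Fin n) (Fin n) ℝ) (hM : M.IsSymm)
    (hX : X ∈ elliptope n) (hmax : ∀ Y ∈ elliptope n, frob M Y ≤ frob M X)
    (v : Fin n → EuclideanSpace ℝ (Fin n)) (hunit : ∀ i, ‖v i‖ = 1)
    (hgram : ∀ i j, X i j = inner ℝ (v i) (v j)) :
    ∀ i : Fin n, ∃ α : ℝ, ∑ j ∈ Finset.univ.erase i, M i j • v j = α • v i :=
  stmt8_general M X hM hmax v hunit hgram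
end

section
/- Let X ∈ L_n be irreducible and satisfy X² = DX for a diagonal matrix D. Then D = γI for some scalar γ ≥ 1. -/
theorem stmt11 {n : ℕ} (X D : Matrix (Fin n) (Fin n) ℝ) (hX : X ∈ elliptope n)
    (hirr : ∀ A : Set (Fin n), (∀ i ∈ A, ∀ j ∉ A, X i j = 0) → A = ∅ ∨ A = Set.univ)
    (hD : D.IsDiag) (heq : X * X = D * X) :
    ∃ γ : ℝ, 1 ≤ γ ∧ D = γ • (1 : Matrix (Fin n) (Fin n) ℝ) := by
  obtain ⟨hpsd, hdiag1⟩ := hX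
  have hsym : ∀ i j, X i j = X j i := fun i j => by
    have h := hpsd.1.apply i j
    simpa using h.symm
  have hXt : X.transpose = X := by ext i j; exact hsym j i
  have hDt : D.transpose = D := by
    ext i j
    by_cases h : i = j
    · subst h; rfl
    · rw [Matrix.transpose_apply, hD h, hD (Ne.symm h)]
  rcases Nat.eq_zero_or_pos n with hn | hn
  · subst hn
    exact ⟨1, le_refl _, by ext i; exact i.elim0⟩
  have hDXe : ∀ i j, (D * X) i j = D i i * X i j := by
    intro i j
    rw [Matrix.mul_apply]
    exact Finset.sum_eq_single_of_mem i (Finset.mem_univ i)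
      (fun b _ hb => by rw [hD (Ne.symm hb), zero_mul])
  have hXDe : ∀ i j, (X * D) i j = X i j * D j j := by
    intro i j
    rw [Matrix.mul_apply]
    exact Finset.sum_eq_single_of_mem j (Finset.mem_univ j)
      (fun b _ hb => by rw [hD hb, mul_zero])
  have hcomm : X * D = D * X := by
    calc X * D = X.transpose * D.transpose := by rw [hXt, hDt]
      _ = (D * X).transpose := (Matrix.transpose_mul D X).symm
      _ = (X * X).transpose := by rw [heq]
      _ = X.transpose * X.transpose := Matrix.transpose_mul X X
      _ = X * X := by rw [hXt]
      _ = D * X := heq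
  have key : ∀ i j, X i j ≠ 0 → D i i = D j j := by
    intro i j hx
    have h := congrFun (congrFun hcomm i) j
    rw [hXDe, hDXe] at h
    have : (D j j - D i i) * X i j = 0 := by ring_nf; linarith [h]
    rcases mul_eq_zero.mp this with h' | h'
    · linarith [h']
    · exact absurd h' hx
  set i0 : Fin n := ⟨0, hn⟩
  set γ := D i0 i0 with hγ
  set A : Set (Fin n) := {i | D i i = γ} with hA
  have hzero : ∀ i ∈ A, ∀ j ∉ A, X i j = 0 := by
    intro i hi j hj
    by_contra hx
    exact hj ((key i j hx).symm.trans hi)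
  rcases hirr A hzero with hempty | huniv
  · exact absurd (hempty ▸ (rfl : D i0 i0 = γ) : i0 ∈ (∅ : Set (Fin n))) (Set.notMem_empty i0)
  have hall : ∀ i, D i i = γ := fun i => (huniv ▸ Set.mem_univ i : i ∈ A)
  have hγ1 : 1 ≤ γ := by
    have h00 : (X * X) i0 i0 = γ := by rw [heq, hDXe, hdiag1, mul_one]
    have hsumsq : (X * X) i0 i0 = ∑ j, (X i0 j) ^ 2 := by
      rw [Matrix.mul_apply]
      exact Finset.sum_congr rfl fun k _ => by rw [← hsym i0 k, sq]
    have hle : (X i0 i0) ^ 2 ≤ ∑ j, (X i0 j) ^ 2 :=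
      Finset.single_le_sum (f := fun j => (X i0 j) ^ 2) (fun j _ => sq_nonneg _) (Finset.mem_univ i0)
    rw [hdiag1, one_pow] at hle
    rw [← h00, hsumsq]
    exact hle
  refine ⟨γ, hγ1, ?_⟩
  ext i j
  by_cases h : i = j
  · subst h
    simp [Matrix.one_apply, hall i]
  · simp [Matrix.one_apply, h, hD h]
end

section
/- Let X ∈ L_n be irreducible with rank s. Then X is a fixed point of T if and only if X = (n/s) ∑_{i=1}^s v(i)v(i)ᵀ for an orthonormal set {v(1),…,v(s)} satisfying (n/s) ∑_{i=1}^s v(i)_j² = 1 for every j = 1,…,n. -/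
/-! A fixed point `X = gram ℝ u` cannot be improved by moving a single unit vector `u j` on the
sphere. First-order optimality makes `∑ q, X j q • u q` a multiple `D j • u j`, so
`(X * X) k j = X k j * D j`; symmetry of `X * X` makes `D` constant along the support graph, hence
constant by irreducibility, and `X * X = d • X`. The eigenvalues of `X` are then `0` and `d`, the
eigenvectors for `d` form the orthonormal family, and the trace gives `d * s = n`.
Conversely such an `X` is `d` times an orthogonal projection `P`, and for `Y` in the elliptope
`frob X Y = d * trace (P * Y) ≤ d * trace Y = d * n = frob X X`. -/

open scoped RealInnerProductSpace Matrix

lemma Fintype.sum_mul_eq_mul_sum_of_eq_zero_or_eq {ι κ : Type*} [Fintype ι] [Fintype κ]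
    {c : ι → ℝ} {d : ℝ} (hc : ∀ i, c i = 0 ∨ c i = d) (e : κ ≃ {i // c i ≠ 0}) (f : ι → ℝ) :
    ∑ i, c i * f i = d * ∑ k, f (e k) := by
  classical
  rw [← Fintype.sum_subtype_add_sum_subtype (fun i => c i ≠ 0), Fintype.sum_eq_zero
    (fun i : {i // ¬c i ≠ 0} => c i * f i) (fun i => by simp [not_not.mp i.2]), add_zero,
    Finset.mul_sum, ← e.sum_comp]
  exact Finset.sum_congr rfl fun k _ => by rw [(hc _).resolve_left (e k).2]

lemma eq_norm_smul_of_forall_inner_le_s13 {E : Type*} [NormedAddCommGroup E] [InnerProductSpace ℝ E]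
    {u c : E} (hu : ‖u‖ = 1) (h : ∀ w : E, ‖w‖ = 1 → ⟪w, c⟫ ≤ ⟪u, c⟫) : c = ‖c‖ • u := by
  rcases eq_or_ne c 0 with rfl | hc
  · simp
  have hc' : ‖c‖ ≠ 0 := norm_ne_zero_iff.mpr hc
  have hle := h (‖c‖⁻¹ • c) (by rw [norm_smul, norm_inv, norm_norm, inv_mul_cancel₀ hc'])
  rw [real_inner_smul_left, real_inner_self_eq_norm_mul_norm, inv_mul_cancel_left₀ hc'] at hle
  have heq : ⟪u, c⟫ = ‖u‖ * ‖c‖ :=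
    le_antisymm (real_inner_le_norm u c) (by rw [hu, one_mul]; exact hle)
  simpa [hu] using (inner_eq_norm_mul_iff_real.mp heq).symm

lemma EuclideanSpace.sum_sum_sq_eq_card_of_orthonormal {ι κ : Type*} [Fintype ι] [Fintype κ]
    {v : κ → EuclideanSpace ℝ ι} (hv : Orthonormal ℝ v) :
    ∑ j, ∑ i, v i j ^ 2 = Fintype.card κ := by
  rw [Finset.sum_comm]
  simp [← EuclideanSpace.real_norm_sq_eq, hv.1]

namespace Matrix

lemma eq_of_connected_support {n α : Type*} {X : Matrix n n ℝ}
    (hirr : ∀ A : Set n, (∀ i ∈ A, ∀ j ∉ A, X i j = 0) → A = ∅ ∨ A = Set.univ) {D : n → α}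
    (hD : ∀ i j, X i j ≠ 0 → D i = D j) (i j : n) : D i = D j := by
  obtain h | h := hirr {k | D k = D i} fun k hk l hl =>
    by_contra fun hkl => hl ((hD k l hkl).symm.trans hk)
  · exact (Set.eq_empty_iff_forall_notMem.mp h i rfl).elim
  · exact (Set.eq_univ_iff_forall.mp h j).symm

variable {n : Type*} [Fintype n]

lemma PosSemidef.exists_eq_gram_s13 {X : Matrix n n ℝ} (hX : X.PosSemidef) :
    ∃ u : n → EuclideanSpace ℝ n, X = gram ℝ u := by
  classical
  open scoped MatrixOrder in
  obtain ⟨A, rfl⟩ := CStarAlgebra.nonneg_iff_eq_star_mul_self.mp hX.nonneg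
  refine ⟨fun q => WithLp.toLp 2 fun p => A p q, ?_⟩
  ext j k
  simp [mul_apply, PiLp.inner_apply, mul_comm]

lemma trace_mul_le_trace_of_isIdempotentElem {P Y : Matrix n n ℝ} (hP : P.IsHermitian)
    (hPP : IsIdempotentElem P) (hY : Y.PosSemidef) : (P * Y).trace ≤ Y.trace := by
  classical
  have hQ : IsIdempotentElem (1 - P) := hPP.one_sub
  have : 0 ≤ ((1 - P) * Y * (1 - P)ᴴ).trace :=
    (hY.mul_mul_conjTranspose_same _).trace_nonneg
  rw [conjTranspose_sub, conjTranspose_one, hP.eq, trace_mul_cycle, hQ.eq, sub_mul, one_mul,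
    trace_sub] at this
  linarith

variable [DecidableEq n]

lemma IsHermitian.eigenvalues_eq_zero_or_eq_of_mul_self_eq_smul {X : Matrix n n ℝ}
    (hX : X.IsHermitian) {d : ℝ} (h : X * X = d • X) (i : n) :
    hX.eigenvalues i = 0 ∨ hX.eigenvalues i = d := by
  have hv := hX.mulVec_eigenvectorBasis i
  have hsq := congrArg (· *ᵥ ⇑(hX.eigenvectorBasis i)) h
  simp only [← mulVec_mulVec, smul_mulVec, hv, mulVec_smul, smul_smul] at hsq
  have hne : ⇑(hX.eigenvectorBasis i) ≠ 0 :=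
    (WithLp.ofLp_eq_zero 2).ne.2 (hX.eigenvectorBasis.orthonormal.ne_zero i)
  have := smul_left_injective ℝ hne hsq
  rcases mul_eq_zero.mp (show hX.eigenvalues i * (hX.eigenvalues i - d) = 0 by linarith)
    with h | h
  · exact .inl h
  · exact .inr (by linarith)

lemma IsHermitian.apply_eq_sum_eigenvalues_mul {X : Matrix n n ℝ} (hX : X.IsHermitian) (j k : n) :
    X j k = ∑ i, hX.eigenvalues i * (hX.eigenvectorBasis i j * hX.eigenvectorBasis i k) := by
  conv_lhs => rw [hX.spectral_theorem, Unitary.conjStarAlgAut_apply]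
  simp only [RCLike.ofReal_real_eq_id, CompTriple.comp_eq, mul_apply, eigenvectorUnitary_apply,
    diagonal_apply, mul_ite, mul_zero, Finset.sum_ite_eq', Finset.mem_univ, ↓reduceIte, star_apply,
    star_trivial]
  exact Finset.sum_congr rfl fun i _ => by ring

lemma IsHermitian.exists_orthonormal_of_mul_self_eq_smul {X : Matrix n n ℝ}
    (hX : X.IsHermitian) {d : ℝ} (h : X * X = d • X) {s : ℕ} (hrank : X.rank = s) :
    ∃ v : Fin s → EuclideanSpace ℝ n, Orthonormal ℝ v ∧ ∀ j k, X j k = d * ∑ i, v i j * v i k := by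
  let e : Fin s ≃ {i // hX.eigenvalues i ≠ 0} :=
    (Fintype.equivFinOfCardEq (hrank ▸ hX.rank_eq_card_non_zero_eigs).symm).symm
  refine ⟨fun k => hX.eigenvectorBasis (e k),
    hX.eigenvectorBasis.orthonormal.comp _ (Subtype.val_injective.comp e.injective), fun j k => ?_⟩
  rw [hX.apply_eq_sum_eigenvalues_mul, Fintype.sum_mul_eq_mul_sum_of_eq_zero_or_eq
    (hX.eigenvalues_eq_zero_or_eq_of_mul_self_eq_smul h) e]

end Matrix

open Matrix

lemma trace_eq_of_mem_elliptope {n : ℕ} {X : Matrix (Fin n) (Fin n) ℝ} (hX : X ∈ elliptope n) :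
    X.trace = n := by
  simp [trace, hX.2]

lemma frob_eq_trace_mul {n : ℕ} (A : Matrix (Fin n) (Fin n) ℝ) {B : Matrix (Fin n) (Fin n) ℝ}
    (hB : B.IsSymm) : frob A B = (A * B).trace := by
  conv_rhs => rw [← hB.eq]
  simp [frob, trace, mul_apply]

lemma frob_gram_update {E : Type*} [NormedAddCommGroup E] [InnerProductSpace ℝ E] {n : ℕ}
    {X : Matrix (Fin n) (Fin n) ℝ} (hX : X.IsSymm) (z : Fin n → E) (j : Fin n) (w : E) :
    frob X (gram ℝ (Function.update z j w)) =
      frob X (gram ℝ z) + 2 * ⟪w - z j, ∑ q, X j q • z q⟫ + X j j * ‖w - z j‖ ^ 2 := by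
  set e : Fin n → E := Pi.single j (w - z j)
  have hz : Function.update z j w = z + e := by
    ext1 p
    rcases eq_or_ne p j with rfl | hp
    · simp [e]
    · simp [e, hp]
  have hl : ∀ p x, ⟪e p, x⟫ = if p = j then ⟪w - z j, x⟫ else 0 := by
    intro p x; split_ifs with h <;> simp [e, h]
  have hr : ∀ p x, ⟪x, e p⟫ = if p = j then ⟪x, w - z j⟫ else 0 := by
    intro p x; split_ifs with h <;> simp [e, h]
  have hcol : ∀ p, X p j = X j p := fun p => hX.apply j p
  simp only [frob, hz, gram_apply, Pi.add_apply, inner_add_left, inner_add_right, hl, hr,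
    mul_add, Finset.sum_add_distrib, mul_ite, mul_zero, Finset.sum_ite_irrel,
    Finset.sum_const_zero, Finset.sum_ite_eq', Finset.mem_univ, if_true, hcol, inner_sum,
    real_inner_smul_right, real_inner_self_eq_norm_sq, real_inner_comm (w - z j)]
  ring

section FixedPoint

variable {n : ℕ} {X : Matrix (Fin n) (Fin n) ℝ}

lemma exists_sum_smul_eq_smul_of_isFixed {E : Type*} [NormedAddCommGroup E]
    [InnerProductSpace ℝ E] {u : Fin n → E} (hXu : X = gram ℝ u) (hdiag : ∀ i, X i i = 1)
    (hfix : ∀ Y ∈ elliptope n, frob X Y ≤ frob X X) :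
    ∃ D : Fin n → ℝ, ∀ j, ∑ q, X j q • u q = D j • u j := by
  have hnorm : ∀ p, ‖u p‖ = 1 := fun p => by
    have := hdiag p
    rw [hXu, gram_apply, real_inner_self_eq_norm_sq] at this
    exact (pow_eq_one_iff_of_nonneg (norm_nonneg _) two_ne_zero).mp this
  have hsymm : X.IsSymm := hXu ▸ isHermitian_iff_isSymm.mp (isHermitian_gram ℝ u)
  refine ⟨fun j => 1 + ‖∑ q, X j q • u q - u j‖, fun j => ?_⟩
  set c := ∑ q, X j q • u q - u j
  -- Moving `u j` to any other unit vector `w` stays in the elliptope, and the change of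
  -- `frob X` simplifies to `2 * (⟪w, c⟫ - ⟪u j, c⟫)`.
  have hc : c = ‖c‖ • u j := eq_norm_smul_of_forall_inner_le_s13 (hnorm j) fun w hw => by
    have hY : gram ℝ (Function.update u j w) ∈ elliptope n := by
      refine ⟨posSemidef_gram ℝ _, fun p => ?_⟩
      rcases eq_or_ne p j with rfl | hp
      · simp [hw]
      · simp [hp, hnorm]
    have := hfix _ hY
    rw [frob_gram_update hsymm, ← hXu, hdiag j, norm_sub_sq_real, hw, hnorm j] at this
    simp only [c, inner_sub_left, inner_sub_right, real_inner_self_eq_norm_sq, hnorm j] at this ⊢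
    linarith
  rw [add_smul, one_smul, ← hc]
  exact (add_sub_cancel _ _).symm

lemma mul_self_apply_of_sum_smul_eq_smul {E : Type*} [NormedAddCommGroup E]
    [InnerProductSpace ℝ E] {u : Fin n → E} (hXu : X = gram ℝ u) {D : Fin n → ℝ}
    (hD : ∀ j, ∑ q, X j q • u q = D j • u j) (k j : Fin n) : (X * X) k j = X k j * D j := by
  calc (X * X) k j = ⟪u k, ∑ q, X j q • u q⟫ := by
        simp [hXu, mul_apply, inner_sum, real_inner_smul_right, real_inner_comm, mul_comm]
    _ = X k j * D j := by rw [hD, real_inner_smul_right, hXu, gram_apply, mul_comm]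

lemma exists_mul_self_eq_smul_of_isFixed (hX : X ∈ elliptope n)
    (hirr : ∀ A : Set (Fin n), (∀ i ∈ A, ∀ j ∉ A, X i j = 0) → A = ∅ ∨ A = Set.univ)
    (hfix : ∀ Y ∈ elliptope n, frob X Y ≤ frob X X) :
    ∃ d : ℝ, X * X = d • X := by
  obtain ⟨u, hXu⟩ := hX.1.exists_eq_gram_s13
  obtain ⟨D, hD⟩ := exists_sum_smul_eq_smul_of_isFixed hXu hX.2 hfix
  have hXX := mul_self_apply_of_sum_smul_eq_smul hXu hD
  have hsymm : X.IsSymm := isHermitian_iff_isSymm.mp hX.1.isHermitian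
  have hXXsymm : (X * X)ᵀ = X * X := by rw [transpose_mul, hsymm.eq]
  have hconst := eq_of_connected_support hirr (D := D) fun i j hij => by
    have := congrFun (congrFun hXXsymm j) i
    rw [transpose_apply, hXX, hXX, hsymm.apply i j] at this
    exact (mul_left_cancel₀ hij this).symm
  rcases isEmpty_or_nonempty (Fin n) with h | ⟨⟨i⟩⟩
  · exact ⟨0, Subsingleton.elim _ _⟩
  · exact ⟨D i, by ext k j; rw [hXX, hconst i j, Matrix.smul_apply, smul_eq_mul, mul_comm]⟩

lemma orthonormal_rep_of_isFixed {s : ℕ} (hX : X ∈ elliptope n)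
    (hirr : ∀ A : Set (Fin n), (∀ i ∈ A, ∀ j ∉ A, X i j = 0) → A = ∅ ∨ A = Set.univ)
    (hrank : X.rank = s) (hfix : ∀ Y ∈ elliptope n, frob X Y ≤ frob X X) :
    ∃ v : Fin s → EuclideanSpace ℝ (Fin n), Orthonormal ℝ v ∧
      (∀ j k : Fin n, X j k = (n / s : ℝ) * ∑ i, v i j * v i k) ∧
      (∀ j : Fin n, (n / s : ℝ) * ∑ i, (v i j) ^ 2 = 1) := by
  obtain ⟨d, hd⟩ := exists_mul_self_eq_smul_of_isFixed hX hirr hfix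
  obtain ⟨v, hv, hrep⟩ := hX.1.isHermitian.exists_orthonormal_of_mul_self_eq_smul hd hrank
  have hdiag : ∀ j, d * ∑ i, v i j ^ 2 = 1 := fun j => by simp [← hX.2 j, hrep, sq]
  have htrace : d * s = n := by
    calc d * s = ∑ j, d * ∑ i, v i j ^ 2 := by
          rw [← Finset.mul_sum, EuclideanSpace.sum_sum_sq_eq_card_of_orthonormal hv,
            Fintype.card_fin]
      _ = n := by simp [hdiag]
  have hds : ∀ j : Fin n, d = n / s := fun j => by
    have hs : (s : ℝ) ≠ 0 := fun hs =>
      j.pos.ne' (by rw [hs, mul_zero] at htrace; exact_mod_cast htrace.symm)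
    rw [eq_div_iff hs, htrace]
  exact ⟨v, hv, fun j k => by rw [← hds j, hrep], fun j => by rw [← hds j, hdiag]⟩

end FixedPoint

lemma isFixed_of_orthonormal_rep {n s : ℕ} {X : Matrix (Fin n) (Fin n) ℝ} (hX : X ∈ elliptope n)
    {v : Fin s → EuclideanSpace ℝ (Fin n)} (hv : Orthonormal ℝ v) {d : ℝ} (hd : 0 ≤ d)
    (hrep : ∀ j k, X j k = d * ∑ i, v i j * v i k) :
    ∀ Y ∈ elliptope n, frob X Y ≤ frob X X := by
  intro Y hY
  set W : Matrix (Fin s) (Fin n) ℝ := of fun i j => v i j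
  have hWW : W * Wᵀ = 1 := by
    rw [← gram_eq_one_iff_orthonormal.mpr hv]
    ext i i'
    simp [W, mul_apply, PiLp.inner_apply, mul_comm]
  have hP : (Wᵀ * W).IsHermitian := by
    simpa using isHermitian_conjTranspose_mul_self W
  have hPP : IsIdempotentElem (Wᵀ * W) := by
    rw [IsIdempotentElem, Matrix.mul_assoc, ← Matrix.mul_assoc W, hWW, Matrix.one_mul]
  have hXW : X = d • (Wᵀ * W) := by ext; simp [W, mul_apply, hrep]
  have hfrob : ∀ Z ∈ elliptope n, frob X Z = d * (Wᵀ * W * Z).trace := fun Z hZ => by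
    rw [frob_eq_trace_mul _ (isHermitian_iff_isSymm.mp hZ.1.isHermitian), hXW, smul_mul,
      trace_smul, smul_eq_mul]
  have hPX : Wᵀ * W * X = X := by rw [hXW, Matrix.mul_smul, hPP.eq]
  rw [hfrob Y hY, hfrob X hX, hPX, trace_eq_of_mem_elliptope hX, ← trace_eq_of_mem_elliptope hY]
  exact mul_le_mul_of_nonneg_left (trace_mul_le_trace_of_isIdempotentElem hP hPP hY.1) hd

theorem stmt13 {n s : ℕ} (X : Matrix (Fin n) (Fin n) ℝ) (hX : X ∈ elliptope n)
    (hirr : ∀ A : Set (Fin n), (∀ i ∈ A, ∀ j ∉ A, X i j = 0) → A = ∅ ∨ A = Set.univ)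
    (hrank : X.rank = s) :
    (∀ Y ∈ elliptope n, frob X Y ≤ frob X X) ↔
      ∃ v : Fin s → EuclideanSpace ℝ (Fin n), Orthonormal ℝ v ∧
        (∀ j k : Fin n, X j k = (n / s : ℝ) * ∑ i, v i j * v i k) ∧
        (∀ j : Fin n, (n / s : ℝ) * ∑ i, (v i j) ^ 2 = 1) := by
  refine ⟨orthonormal_rep_of_isFixed hX hirr hrank, ?_⟩
  rintro ⟨v, hv, hrep, -⟩
  exact isFixed_of_orthonormal_rep hX hv (by positivity) hrep
end

section
/- Let X be a vertex of L_n and M ∈ L_n with ‖M − X‖ < 1 in Frobenius norm. Then X is the unique maximizer of Y ↦ M·Y over L_n, i.e., T(M) = {X}; hence every vertex of L_n is an attractive fixed point of T. -/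
/-!
For a vertex `X = v vᵀ` and `Y` in the elliptope, `|Y i j| ≤ 1` makes `d i j := 1 - X i j * Y i j`
nonnegative, and `X i j - Y i j = X i j * d i j` because `X i j = ±1`. Since `M i j * X i j ≥ 1 - |M i j - X i j|`
and each entry is bounded by the Frobenius norm, `M·X - M·Y ≥ (1 - ‖M - X‖) ∑ d i j`, which is positive
unless `Y = X`. Applied to `M` and to `X` itself, this shows that every iteration of `T` started at `M`
reaches `X` in one step and stays there.
-/

open Matrix Filter Topology

section Scalar

variable {x y : ℝ}

lemma one_sub_mul_nonneg_of_mul_self_eq_one (hx : x * x = 1) (hy : |y| ≤ 1) :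
    0 ≤ 1 - x * y := by
  rcases mul_self_eq_one_iff.1 hx with rfl | rfl <;> linarith [abs_le.1 hy]

lemma one_sub_mul_pos_of_ne (hx : x * x = 1) (hy : |y| ≤ 1) (hne : y ≠ x) :
    0 < 1 - x * y := by
  refine (one_sub_mul_nonneg_of_mul_self_eq_one hx hy).lt_of_ne fun h => hne ?_
  linear_combination x * h - y * hx

lemma one_sub_mul_le_mul_sub {m c : ℝ} (hx : x * x = 1) (hy : |y| ≤ 1) (hm : |m - x| ≤ c) :
    (1 - c) * (1 - x * y) ≤ m * (x - y) := by
  have hmx : 1 - c ≤ m * x := by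
    have : |(m - x) * x| ≤ c := by
      have hx1 : |x| = 1 := by rcases mul_self_eq_one_iff.1 hx with rfl | rfl <;> simp
      rwa [abs_mul, hx1, mul_one]
    linarith [(abs_le.1 this).1]
  calc (1 - c) * (1 - x * y) ≤ m * x * (1 - x * y) :=
        mul_le_mul_of_nonneg_right hmx (one_sub_mul_nonneg_of_mul_self_eq_one hx hy)
    _ = m * (x - y) := by linear_combination (-m * y) * hx

end Scalar

section Frob

variable {n : ℕ} {M X Y : Matrix (Fin n) (Fin n) ℝ}

lemma frob_sub_frob (M X Y : Matrix (Fin n) (Fin n) ℝ) :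
    frob M X - frob M Y = ∑ i, ∑ j, M i j * (X i j - Y i j) := by
  simp only [frob, ← Finset.sum_sub_distrib, mul_sub]

lemma abs_apply_le_sqrt_frob_self (A : Matrix (Fin n) (Fin n) ℝ) (i j : Fin n) :
    |A i j| ≤ √(frob A A) := by
  refine Real.abs_le_sqrt ?_
  calc A i j ^ 2 = A i j * A i j := sq _
    _ ≤ ∑ j, A i j * A i j :=
        Finset.single_le_sum (fun k _ => mul_self_nonneg (A i k)) (Finset.mem_univ j)
    _ ≤ frob A A :=
        Finset.single_le_sum (f := fun i => ∑ j, A i j * A i j)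
          (fun k _ => Finset.sum_nonneg fun l _ => mul_self_nonneg (A k l)) (Finset.mem_univ i)

lemma mul_sum_one_sub_mul_le_frob_sub {c : ℝ} (hX : ∀ i j, X i j * X i j = 1)
    (hY : ∀ i j, |Y i j| ≤ 1) (hM : ∀ i j, |M i j - X i j| ≤ c) :
    (1 - c) * ∑ i, ∑ j, (1 - X i j * Y i j) ≤ frob M X - frob M Y := by
  simp only [frob_sub_frob, Finset.mul_sum]
  exact Finset.sum_le_sum fun i _ => Finset.sum_le_sum fun j _ =>
    one_sub_mul_le_mul_sub (hX i j) (hY i j) (hM i j)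

lemma sum_one_sub_mul_pos (hX : ∀ i j, X i j * X i j = 1) (hY : ∀ i j, |Y i j| ≤ 1)
    (hne : Y ≠ X) : 0 < ∑ i, ∑ j, (1 - X i j * Y i j) := by
  obtain ⟨i, j, hij⟩ : ∃ i j, Y i j ≠ X i j := by
    by_contra! h
    exact hne (Matrix.ext h)
  have hnonneg : ∀ i j, 0 ≤ 1 - X i j * Y i j := fun i j =>
    one_sub_mul_nonneg_of_mul_self_eq_one (hX i j) (hY i j)
  refine Finset.sum_pos' (fun k _ => Finset.sum_nonneg fun l _ => hnonneg k l)
    ⟨i, Finset.mem_univ i, ?_⟩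
  exact Finset.sum_pos' (fun l _ => hnonneg i l)
    ⟨j, Finset.mem_univ j, one_sub_mul_pos_of_ne (hX i j) (hY i j) hij⟩

lemma frob_lt_frob_of_ne {c : ℝ} (hX : ∀ i j, X i j * X i j = 1)
    (hY : ∀ i j, |Y i j| ≤ 1) (hM : ∀ i j, |M i j - X i j| ≤ c) (hc : c < 1) (hne : Y ≠ X) :
    frob M Y < frob M X := by
  have := mul_pos (sub_pos.2 hc) (sum_one_sub_mul_pos hX hY hne)
  linarith [mul_sum_one_sub_mul_le_frob_sub hX hY hM]

end Frob

lemma Matrix.PosSemidef.sq_apply_le {ι : Type*} [Fintype ι] {A : Matrix ι ι ℝ}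
    (hA : A.PosSemidef) (i j : ι) : A i j ^ 2 ≤ A i i * A j j := by
  have h := (hA.submatrix ![i, j]).det_nonneg
  rw [det_fin_two] at h
  have hsym : A j i = A i j := hA.1.apply i j
  simp only [submatrix_apply, Matrix.cons_val_zero, Matrix.cons_val_one, hsym] at h
  nlinarith

lemma abs_apply_le_one_of_mem_elliptope {n : ℕ} {Y : Matrix (Fin n) (Fin n) ℝ}
    (hY : Y ∈ elliptope n) (i j : Fin n) : |Y i j| ≤ 1 := by
  have := hY.1.sq_apply_le i j
  rw [hY.2 i, hY.2 j, mul_one] at this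
  exact (sq_le_one_iff_abs_le_one _).1 this

lemma vecMulVec_mem_elliptope {n : ℕ} {v : Fin n → ℝ} (hv : ∀ i, v i * v i = 1) :
    vecMulVec v v ∈ elliptope n :=
  ⟨by simpa using posSemidef_vecMulVec_self_star v, fun i => by simp [vecMulVec_apply, hv]⟩

def elliptopeArgmax {n : ℕ} (M : Matrix (Fin n) (Fin n) ℝ) : Set (Matrix (Fin n) (Fin n) ℝ) :=
  {Y | Y ∈ elliptope n ∧ ∀ Z ∈ elliptope n, frob M Z ≤ frob M Y}

theorem elliptopeArgmax_eq_singleton {n : ℕ} {v : Fin n → ℝ} (hv : ∀ i, v i * v i = 1)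
    {M : Matrix (Fin n) (Fin n) ℝ} (hM : √(frob (M - vecMulVec v v) (M - vecMulVec v v)) < 1) :
    elliptopeArgmax M = {vecMulVec v v} := by
  set X := vecMulVec v v
  have hX : ∀ i j, X i j * X i j = 1 := fun i j => by
    show v i * v j * (v i * v j) = 1
    linear_combination (v j * v j) * hv i + hv j
  have hXmem : X ∈ elliptope n := vecMulVec_mem_elliptope hv
  have hlt : ∀ Y ∈ elliptope n, Y ≠ X → frob M Y < frob M X := fun Y hY hne =>
    frob_lt_frob_of_ne hX (abs_apply_le_one_of_mem_elliptope hY)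
      (abs_apply_le_sqrt_frob_self (M - X)) hM hne
  ext Y
  constructor
  · rintro ⟨hY, hmax⟩
    by_contra hne
    exact (hmax X hXmem).not_gt (hlt Y hY hne)
  · rintro rfl
    refine ⟨hXmem, fun Z hZ => ?_⟩
    rcases eq_or_ne Z X with rfl | hne
    · exact le_rfl
    · exact (hlt Z hZ hne).le

theorem tendsto_of_succ_mem_of_eq_singleton {α : Type*} [TopologicalSpace α] {T : α → Set α}
    {x : ℕ → α} {a : α} (h₀ : T (x 0) = {a}) (ha : T a = {a}) (hx : ∀ i, x (i + 1) ∈ T (x i)) :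
    Tendsto x atTop (𝓝 a) := by
  have hconst : ∀ i, x (i + 1) = a := by
    intro i
    induction i with
    | zero => simpa [h₀] using hx 0
    | succ i ih => simpa [ih, ha] using hx (i + 1)
  refine (tendsto_add_atTop_iff_nat 1).1 ?_
  simp only [hconst]
  exact tendsto_const_nhds

theorem stmt18_general {n : ℕ} (v : Fin n → ℝ) (hv : ∀ i, v i = 1 ∨ v i = -1)
    (X : Matrix (Fin n) (Fin n) ℝ) (hXdef : ∀ i j, X i j = v i * v j)
    (M : Matrix (Fin n) (Fin n) ℝ)
    (hclose : Real.sqrt (frob (M - X) (M - X)) < 1) :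
    {Y | Y ∈ elliptope n ∧ ∀ Z ∈ elliptope n, frob M Z ≤ frob M Y} = {X} ∧
      ∀ x : ℕ → Matrix (Fin n) (Fin n) ℝ, x 0 = M →
        (∀ i, x (i + 1) ∈ elliptope n ∧
          ∀ Z ∈ elliptope n, frob (x i) Z ≤ frob (x i) (x (i + 1))) →
        Filter.Tendsto x Filter.atTop (nhds X) := by
  obtain rfl : X = vecMulVec v v := Matrix.ext hXdef
  have hv' : ∀ i, v i * v i = 1 := fun i => mul_self_eq_one_iff.2 (hv i)
  have hM : elliptopeArgmax M = {vecMulVec v v} := elliptopeArgmax_eq_singleton hv' hclose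
  have hX : elliptopeArgmax (vecMulVec v v) = {vecMulVec v v} :=
    elliptopeArgmax_eq_singleton hv' (by simp [frob])
  refine ⟨hM, fun x hx₀ hx => tendsto_of_succ_mem_of_eq_singleton (hx₀ ▸ hM) hX hx⟩

theorem stmt18 {n : ℕ} (v : Fin n → ℝ) (hv : ∀ i, v i = 1 ∨ v i = -1)
    (X : Matrix (Fin n) (Fin n) ℝ) (hXdef : ∀ i j, X i j = v i * v j)
    (M : Matrix (Fin n) (Fin n) ℝ) (hM : M ∈ elliptope n)
    (hclose : Real.sqrt (frob (M - X) (M - X)) < 1) :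
    {Y | Y ∈ elliptope n ∧ ∀ Z ∈ elliptope n, frob M Z ≤ frob M Y} = {X} ∧
      ∀ x : ℕ → Matrix (Fin n) (Fin n) ℝ, x 0 = M →
        (∀ i, x (i + 1) ∈ elliptope n ∧
          ∀ Z ∈ elliptope n, frob (x i) Z ≤ frob (x i) (x (i + 1))) →
        Filter.Tendsto x Filter.atTop (nhds X) :=
  stmt18_general v hv X hXdef M hclose
end
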